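/- arXiv:2509.22798 — 3 statements merged into one kernel-verified Lean document; each statement's English description precedes it below -/
import Mathlib

section
/- Let φ ∈ (0,1), let W be a Bernoulli random variable with P(W = 1) = 1 − φ, independent of a pair (T₁, T₂) of ℕ-valued random variables with finite second moments and means E(T₁) = λ₁, E(T₂) = λ₂, and set (X₁, X₂) = (W·T₁, W·T₂). Then cov(X₁, X₂) = (1 − φ) cov(T₁, T₂) + φ(1 − φ) λ₁ λ₂. -/
open MeasureTheory ProbabilityTheory

/-! For the inflation indicator `B ∈ {0, 1}` we have `B² = B`, so the mixed moment
`E[(BX)(BY)] = E[B] E[XY]`, while `E[BX] = E[B] E[X]` and `E[BY] = E[B] E[Y]` by independence.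
With `p = E[B] = 1 - φ`, the covariance `p E[XY] - p² E[X] E[Y]` splits as
`p cov(X, Y) + p (1 - p) E[X] E[Y]`. -/

lemma integral_eq_measureReal_of_eq_zero_or_eq_one {Ω : Type*} [MeasurableSpace Ω]
    {μ : Measure Ω} {B : Ω → ℝ} (hBm : Measurable B)
    (hB : ∀ ω, B ω = 0 ∨ B ω = 1) : ∫ ω, B ω ∂μ = μ.real {ω | B ω = 1} := by
  calc ∫ ω, B ω ∂μ = ∫ ω, Set.indicator {ω | B ω = 1} 1 ω ∂μ := by
        congr 1 with ω
        rcases hB ω with h | h <;> simp [h]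
    _ = μ.real {ω | B ω = 1} := integral_indicator_one (hBm (measurableSet_singleton 1))

namespace ProbabilityTheory.IndepFun

variable {Ω : Type*} [MeasurableSpace Ω] {μ : Measure Ω} {B X Y : Ω → ℝ}

lemma integral_mul_mul_of_mul_self (hind : IndepFun B (fun ω => (X ω, Y ω)) μ)
    (hB : ∀ ω, B ω * B ω = B ω) (hBm : AEStronglyMeasurable B μ)
    (hXYm : AEStronglyMeasurable (fun ω => X ω * Y ω) μ) :
    ∫ ω, B ω * X ω * (B ω * Y ω) ∂μ = (∫ ω, B ω ∂μ) * ∫ ω, X ω * Y ω ∂μ := by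
  have hmul : ∀ ω, B ω * X ω * (B ω * Y ω) = B ω * (X ω * Y ω) := fun ω => by
    linear_combination X ω * Y ω * hB ω
  simp_rw [hmul]
  have hBXY : IndepFun B (fun ω => X ω * Y ω) μ :=
    hind.comp measurable_id (measurable_fst.mul measurable_snd)
  exact hBXY.integral_fun_mul_eq_mul_integral hBm hXYm

theorem integral_mul_mul_sub_mul_integral_of_mul_self
    (hind : IndepFun B (fun ω => (X ω, Y ω)) μ) (hB : ∀ ω, B ω * B ω = B ω)
    (hBm : AEStronglyMeasurable B μ) (hXm : AEStronglyMeasurable X μ)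
    (hYm : AEStronglyMeasurable Y μ) :
    (∫ ω, B ω * X ω * (B ω * Y ω) ∂μ) - (∫ ω, B ω * X ω ∂μ) * ∫ ω, B ω * Y ω ∂μ
      = (∫ ω, B ω ∂μ) * ((∫ ω, X ω * Y ω ∂μ) - (∫ ω, X ω ∂μ) * ∫ ω, Y ω ∂μ)
        + (∫ ω, B ω ∂μ) * (1 - ∫ ω, B ω ∂μ) * (∫ ω, X ω ∂μ) * ∫ ω, Y ω ∂μ := by
  have hBX : IndepFun B X μ := hind.comp measurable_id measurable_fst
  have hBY : IndepFun B Y μ := hind.comp measurable_id measurable_snd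
  rw [hind.integral_mul_mul_of_mul_self hB hBm (hXm.mul hYm),
    hBX.integral_fun_mul_eq_mul_integral hBm hXm, hBY.integral_fun_mul_eq_mul_integral hBm hYm]
  ring

end ProbabilityTheory.IndepFun

theorem stmt_6_general {Ω : Type*} [MeasurableSpace Ω] (μ : Measure Ω)
    (φ lam₁ lam₂ : ℝ) (hφ : φ ∈ Set.Ioo (0 : ℝ) 1)
    (W T₁ T₂ : Ω → ℕ) (hWm : Measurable W) (hT₁m : Measurable T₁) (hT₂m : Measurable T₂)
    (hW01 : ∀ ω, W ω = 0 ∨ W ω = 1)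
    (hW1 : μ {ω | W ω = 1} = ENNReal.ofReal (1 - φ))
    (hmean₁ : ∫ ω, (T₁ ω : ℝ) ∂μ = lam₁)
    (hmean₂ : ∫ ω, (T₂ ω : ℝ) ∂μ = lam₂)
    (hind : IndepFun W (fun ω => (T₁ ω, T₂ ω)) μ) :
    (∫ ω, ((W ω * T₁ ω : ℕ) : ℝ) * ((W ω * T₂ ω : ℕ) : ℝ) ∂μ)
        - (∫ ω, ((W ω * T₁ ω : ℕ) : ℝ) ∂μ) * (∫ ω, ((W ω * T₂ ω : ℕ) : ℝ) ∂μ)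
      = (1 - φ) * ((∫ ω, (T₁ ω : ℝ) * (T₂ ω : ℝ) ∂μ) - lam₁ * lam₂)
          + φ * (1 - φ) * lam₁ * lam₂ := by
  have hcast : Measurable (fun n : ℕ => (n : ℝ)) := measurable_from_top
  have hWm' : Measurable fun ω => (W ω : ℝ) := by fun_prop
  have hT₁m' : Measurable fun ω => (T₁ ω : ℝ) := by fun_prop
  have hT₂m' : Measurable fun ω => (T₂ ω : ℝ) := by fun_prop
  have hW01' : ∀ ω, (W ω : ℝ) = 0 ∨ (W ω : ℝ) = 1 := fun ω => by
    rcases hW01 ω with h | h <;> simp [h]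
  have hEW : ∫ ω, (W ω : ℝ) ∂μ = 1 - φ := by
    rw [integral_eq_measureReal_of_eq_zero_or_eq_one hWm' hW01']
    simp only [Nat.cast_eq_one, measureReal_def, hW1]
    exact ENNReal.toReal_ofReal (by linarith [hφ.2])
  have hind' : IndepFun (fun ω => (W ω : ℝ)) (fun ω => ((T₁ ω : ℝ), (T₂ ω : ℝ))) μ :=
    hind.comp hcast (hcast.prodMap hcast)
  simp only [Nat.cast_mul]
  rw [hind'.integral_mul_mul_sub_mul_integral_of_mul_self
      (fun ω => by rcases hW01' ω with h | h <;> simp [h])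
      hWm'.aestronglyMeasurable hT₁m'.aestronglyMeasurable hT₂m'.aestronglyMeasurable,
    hEW, hmean₁, hmean₂]
  ring

/-- In the common zero-inflation bivariate model `(X₁, X₂) = (W T₁, W T₂)` with `W` Bernoulli of
success probability `1 - φ` independent of the ℕ-valued pair `(T₁, T₂)` with finite second
moments and means `λ₁, λ₂`, the covariance satisfies
`cov(X₁, X₂) = (1-φ) cov(T₁, T₂) + φ (1-φ) λ₁ λ₂`, where `cov(U,V) = E(UV) - E(U)E(V)`. -/
theorem stmt_6 {Ω : Type*} [MeasurableSpace Ω] (μ : Measure Ω) [IsProbabilityMeasure μ]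
    (φ lam₁ lam₂ : ℝ) (hφ : φ ∈ Set.Ioo (0 : ℝ) 1)
    (W T₁ T₂ : Ω → ℕ) (hWm : Measurable W) (hT₁m : Measurable T₁) (hT₂m : Measurable T₂)
    (hW01 : ∀ ω, W ω = 0 ∨ W ω = 1)
    (hW1 : μ {ω | W ω = 1} = ENNReal.ofReal (1 - φ))
    (hT₁sq : Integrable (fun ω => ((T₁ ω : ℝ)) ^ 2) μ)
    (hT₂sq : Integrable (fun ω => ((T₂ ω : ℝ)) ^ 2) μ)
    (hmean₁ : ∫ ω, (T₁ ω : ℝ) ∂μ = lam₁)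
    (hmean₂ : ∫ ω, (T₂ ω : ℝ) ∂μ = lam₂)
    (hind : IndepFun W (fun ω => (T₁ ω, T₂ ω)) μ) :
    (∫ ω, ((W ω * T₁ ω : ℕ) : ℝ) * ((W ω * T₂ ω : ℕ) : ℝ) ∂μ)
        - (∫ ω, ((W ω * T₁ ω : ℕ) : ℝ) ∂μ) * (∫ ω, ((W ω * T₂ ω : ℕ) : ℝ) ∂μ)
      = (1 - φ) * ((∫ ω, (T₁ ω : ℝ) * (T₂ ω : ℝ) ∂μ) - lam₁ * lam₂)
          + φ * (1 - φ) * lam₁ * lam₂ :=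
  stmt_6_general μ φ lam₁ lam₂ hφ W T₁ T₂ hWm hT₁m hT₂m hW01 hW1 hmean₁ hmean₂ hind
end

section
/- Let φ ∈ (0,1) and λ₁, λ₂ > 0. Let W be a Bernoulli random variable with P(W = 1) = 1 − φ, independent of a pair (T₁, T₂) of random variables with finite second moments such that T₁ ~ Poisson(λ₁) and T₂ ~ Poisson(λ₂) marginally, and set (X₁, X₂) = (W·T₁, W·T₂). Then corr(X₁, X₂) = corr(T₁, T₂) / √((1 + φλ₁)(1 + φλ₂)) + φλ₁λ₂ / √((1 + φλ₁)(1 + φλ₂) λ₁ λ₂). -/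
/-!
Since `W² = W` and `W` is independent of `(T₁, T₂)`, every moment of positive order of
`(W T₁, W T₂)` is `E W = 1 - φ` times the corresponding moment of `(T₁, T₂)`. Hence
`cov(X₁, X₂) = (1 - φ) (cov(T₁, T₂) + φ E T₁ E T₂)` and `var Xᵢ = (1 - φ) (var Tᵢ + φ (E Tᵢ)²)`.
For Poisson margins the factorial moments `E[Tᵢ (Tᵢ - 1) ⋯ (Tᵢ - k + 1)] = λᵢ ^ k` give
`E Tᵢ = var Tᵢ = λᵢ`, and the factor `1 - φ` cancels in the correlation.
-/

open MeasureTheory ProbabilityTheory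
open scoped NNReal

lemma hasSum_descFactorial_mul_pow_div_factorial (x : ℝ) (k : ℕ) :
    HasSum (fun n : ℕ ↦ (n.descFactorial k : ℝ) * (x ^ n / n.factorial)) (x ^ k * Real.exp x) := by
  rw [← hasSum_nat_add_iff' k]
  have hlow : ∑ i ∈ Finset.range k, (i.descFactorial k : ℝ) * (x ^ i / i.factorial) = 0 :=
    Finset.sum_eq_zero fun i hi ↦ by
      simp [Nat.descFactorial_eq_zero_iff_lt.mpr (Finset.mem_range.mp hi)]
  have hshift (n : ℕ) :
      ((n + k).descFactorial k : ℝ) * (x ^ (n + k) / (n + k).factorial)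
        = x ^ k * (x ^ n / n.factorial) := by
    rw [← Nat.factorial_mul_descFactorial (Nat.le_add_left k n), Nat.add_sub_cancel]
    have hdesc : ((n + k).descFactorial k : ℝ) ≠ 0 := by
      exact_mod_cast (Nat.descFactorial_pos.mpr (Nat.le_add_left k n)).ne'
    push_cast
    field_simp
    ring
  rw [hlow, sub_zero, funext hshift, Real.exp_eq_exp_ℝ]
  exact (NormedSpace.expSeries_div_hasSum_exp x).mul_left _

lemma hasSum_descFactorial_poissonMeasure (r : ℝ≥0) (k : ℕ) :
    HasSum (fun n : ℕ ↦ Real.exp (-r) * r ^ n / n.factorial * (n.descFactorial k : ℝ)) (r ^ k) := by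
  have h := (hasSum_descFactorial_mul_pow_div_factorial r k).mul_left (Real.exp (-r))
  rw [mul_left_comm, ← Real.exp_add, neg_add_cancel, Real.exp_zero, mul_one] at h
  have hterm : (fun n : ℕ ↦ Real.exp (-r) * r ^ n / n.factorial * (n.descFactorial k : ℝ)) =
      fun n ↦ Real.exp (-r) * ((n.descFactorial k : ℝ) * (r ^ n / n.factorial)) :=
    funext fun n ↦ by ring
  rwa [hterm]

lemma integrable_descFactorial_poissonMeasure (r : ℝ≥0) (k : ℕ) :
    Integrable (fun n : ℕ ↦ (n.descFactorial k : ℝ)) Po(r) := by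
  simpa [integrable_poissonMeasure_iff] using (hasSum_descFactorial_poissonMeasure r k).summable

lemma integral_descFactorial_poissonMeasure (r : ℝ≥0) (k : ℕ) :
    ∫ n, (n.descFactorial k : ℝ) ∂Po(r) = r ^ k := by
  rw [integral_poissonMeasure]
  exact (hasSum_descFactorial_poissonMeasure r k).tsum_eq

lemma natCast_sq_eq_descFactorial (n : ℕ) :
    (n : ℝ) ^ 2 = (n.descFactorial 2 : ℝ) + (n.descFactorial 1 : ℝ) := by
  rcases n with _ | n
  · simp
  · simp [Nat.descFactorial_succ]; ring

lemma integral_natCast_poissonMeasure (r : ℝ≥0) : ∫ n, (n : ℝ) ∂Po(r) = r := by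
  simpa using integral_descFactorial_poissonMeasure r 1

lemma memLp_natCast_poissonMeasure (r : ℝ≥0) : MemLp (fun n : ℕ ↦ (n : ℝ)) 2 Po(r) := by
  rw [memLp_two_iff_integrable_sq .of_discrete]
  simp only [natCast_sq_eq_descFactorial]
  exact (integrable_descFactorial_poissonMeasure r 2).add
    (integrable_descFactorial_poissonMeasure r 1)

lemma variance_natCast_poissonMeasure (r : ℝ≥0) : Var[fun n : ℕ ↦ (n : ℝ); Po(r)] = r := by
  rw [variance_eq_sub (memLp_natCast_poissonMeasure r)]
  simp only [Pi.pow_apply, natCast_sq_eq_descFactorial]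
  rw [integral_add (integrable_descFactorial_poissonMeasure r 2)
    (integrable_descFactorial_poissonMeasure r 1), integral_descFactorial_poissonMeasure,
    integral_descFactorial_poissonMeasure, integral_natCast_poissonMeasure]
  ring

lemma hasLaw_poissonMeasure_of_measure_eq {Ω : Type*} [MeasurableSpace Ω] {μ : Measure Ω}
    {T : Ω → ℕ} (hT : Measurable T) {r : ℝ≥0}
    (hlaw : ∀ n : ℕ, μ {ω | T ω = n} = ENNReal.ofReal (Real.exp (-r) * r ^ n / n.factorial)) :
    HasLaw T Po(r) μ where
  aemeasurable := hT.aemeasurable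
  map_eq := Measure.ext_of_singleton fun n ↦ by
    rw [Measure.map_apply hT (measurableSet_singleton n), poissonMeasure_singleton]
    exact hlaw n

lemma ProbabilityTheory.HasLaw.memLp_comp {Ω 𝓧 E : Type*} [MeasurableSpace Ω]
    [MeasurableSpace 𝓧] [NormedAddCommGroup E] {μ : Measure Ω} {ν : Measure 𝓧} {X : Ω → 𝓧}
    (hX : HasLaw X ν μ) {f : 𝓧 → E} {p : ENNReal} (hf : MemLp f p ν) : MemLp (f ∘ X) p μ := by
  rw [← hX.map_eq] at hf
  exact (memLp_map_measure_iff hf.1 hX.aemeasurable).mp hf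

lemma ProbabilityTheory.HasLaw.variance_comp {Ω 𝓧 : Type*} [MeasurableSpace Ω]
    [MeasurableSpace 𝓧] {μ : Measure Ω} {ν : Measure 𝓧} {X : Ω → 𝓧} (hX : HasLaw X ν μ) {f : 𝓧 → ℝ}
    (hf : AEMeasurable f ν) : Var[f ∘ X; μ] = Var[f; ν] := by
  rw [← hX.map_eq] at hf ⊢
  exact (variance_map hf hX.aemeasurable).symm

section PoissonLaw

variable {Ω : Type*} [MeasurableSpace Ω] {μ : Measure Ω} {T : Ω → ℕ} {r : ℝ≥0}

lemma ProbabilityTheory.HasLaw.integral_natCast_of_poissonMeasure (hT : HasLaw T Po(r) μ) :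
    ∫ ω, (T ω : ℝ) ∂μ = r :=
  (hT.integral_comp .of_discrete).trans (integral_natCast_poissonMeasure r)

lemma ProbabilityTheory.HasLaw.memLp_natCast_of_poissonMeasure (hT : HasLaw T Po(r) μ) :
    MemLp (fun ω ↦ (T ω : ℝ)) 2 μ :=
  hT.memLp_comp (memLp_natCast_poissonMeasure r)

lemma ProbabilityTheory.HasLaw.variance_natCast_of_poissonMeasure (hT : HasLaw T Po(r) μ) :
    Var[fun ω ↦ (T ω : ℝ); μ] = r :=
  (hT.variance_comp .of_discrete).trans (variance_natCast_poissonMeasure r)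

end PoissonLaw

lemma integral_natCast_eq_measureReal_of_zero_or_one {Ω : Type*} [MeasurableSpace Ω]
    {μ : Measure Ω} {W : Ω → ℕ} (hWm : Measurable W) (hW : ∀ ω, W ω = 0 ∨ W ω = 1) :
    ∫ ω, (W ω : ℝ) ∂μ = μ.real {ω | W ω = 1} := by
  have hW_eq : (fun ω ↦ (W ω : ℝ)) = {ω | W ω = 1}.indicator 1 := by
    funext ω
    rcases hW ω with h | h <;> simp [h]
  rw [hW_eq]
  exact integral_indicator_one (hWm (measurableSet_singleton 1))

section ZeroInflation

variable {Ω : Type*} [MeasurableSpace Ω] {μ : Measure Ω} {W : Ω → ℝ}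

lemma integral_mul_mul_sub_of_indepFun_of_zero_or_one {T₁ T₂ : Ω → ℝ}
    (hW : ∀ ω, W ω = 0 ∨ W ω = 1) (hWm : AEStronglyMeasurable W μ) (hT₁ : AEStronglyMeasurable T₁ μ)
    (hT₂ : AEStronglyMeasurable T₂ μ) (hind : IndepFun W (fun ω ↦ (T₁ ω, T₂ ω)) μ) :
    ∫ ω, W ω * T₁ ω * (W ω * T₂ ω) ∂μ - (∫ ω, W ω * T₁ ω ∂μ) * ∫ ω, W ω * T₂ ω ∂μ
      = μ[W] * (∫ ω, T₁ ω * T₂ ω ∂μ - μ[T₁] * μ[T₂]) + μ[W] * (1 - μ[W]) * μ[T₁] * μ[T₂] := by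
  have hWW : ∀ ω, W ω * T₁ ω * (W ω * T₂ ω) = W ω * (T₁ ω * T₂ ω) := fun ω ↦ by
    rcases hW ω with h | h <;> simp [h]
  have hind₁₂ : IndepFun W (fun ω ↦ T₁ ω * T₂ ω) μ :=
    hind.comp measurable_id (measurable_fst.mul measurable_snd)
  have hind₁ : IndepFun W T₁ μ := hind.comp measurable_id measurable_fst
  have hind₂ : IndepFun W T₂ μ := hind.comp measurable_id measurable_snd
  simp only [hWW]
  rw [hind₁₂.integral_fun_mul_eq_mul_integral hWm (hT₁.mul hT₂),
    hind₁.integral_fun_mul_eq_mul_integral hWm hT₁,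
    hind₂.integral_fun_mul_eq_mul_integral hWm hT₂]
  ring

lemma variance_mul_of_indepFun_of_zero_or_one [IsProbabilityMeasure μ] {T : Ω → ℝ}
    (hW : ∀ ω, W ω = 0 ∨ W ω = 1) (hWm : AEStronglyMeasurable W μ) (hT : MemLp T 2 μ)
    (hind : IndepFun W T μ) :
    Var[fun ω ↦ W ω * T ω; μ] = μ[W] * Var[T; μ] + μ[W] * (1 - μ[W]) * μ[T] ^ 2 := by
  have hWT : MemLp (fun ω ↦ W ω * T ω) 2 μ :=
    hT.of_le (hWm.mul hT.1) (ae_of_all _ fun ω ↦ by rcases hW ω with h | h <;> simp [h])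
  have hsq : ∀ ω, (W ω * T ω) ^ 2 = W ω * T ω ^ 2 := fun ω ↦ by
    rcases hW ω with h | h <;> simp [h]
  have hind_sq : IndepFun W (fun ω ↦ T ω ^ 2) μ :=
    hind.comp measurable_id (measurable_id.pow_const 2)
  rw [variance_eq_sub hWT, variance_eq_sub hT]
  simp only [Pi.pow_apply, hsq]
  rw [hind_sq.integral_fun_mul_eq_mul_integral hWm (hT.1.pow 2),
    hind.integral_fun_mul_eq_mul_integral hWm hT.1]
  ring

end ZeroInflation

lemma corr_zeroInflated_eq {φ a b : ℝ} (c : ℝ) (hφ₀ : 0 ≤ φ) (hφ₁ : φ < 1) (ha : 0 < a)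
    (hb : 0 < b) :
    ((1 - φ) * c + (1 - φ) * φ * a * b)
        / Real.sqrt (((1 - φ) * a + (1 - φ) * φ * a ^ 2) * ((1 - φ) * b + (1 - φ) * φ * b ^ 2))
      = c / Real.sqrt (a * b) / Real.sqrt ((1 + φ * a) * (1 + φ * b))
        + φ * a * b / Real.sqrt ((1 + φ * a) * (1 + φ * b) * a * b) := by
  have hprod : ((1 - φ) * a + (1 - φ) * φ * a ^ 2) * ((1 - φ) * b + (1 - φ) * φ * b ^ 2)
      = (1 - φ) ^ 2 * ((1 + φ * a) * (1 + φ * b) * a * b) := by ring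
  have hsplit : Real.sqrt (a * b) * Real.sqrt ((1 + φ * a) * (1 + φ * b))
      = Real.sqrt ((1 + φ * a) * (1 + φ * b) * a * b) := by
    rw [← Real.sqrt_mul (by positivity)]
    ring_nf
  have hD : 0 < Real.sqrt ((1 + φ * a) * (1 + φ * b) * a * b) := by positivity
  have hφ : 1 - φ ≠ 0 := (sub_pos.mpr hφ₁).ne'
  rw [hprod, Real.sqrt_mul (by positivity), Real.sqrt_sq (by linarith), div_div, hsplit]
  field_simp

/-- In the common zero-inflation bivariate model `(X₁, X₂) = (W T₁, W T₂)`, where `W` is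
Bernoulli with success probability `1 - φ`, independent of a pair `(T₁, T₂)` with Poisson
margins of rates `λ₁, λ₂`, the correlation satisfies
`corr(X₁,X₂) = corr(T₁,T₂)/√((1+φλ₁)(1+φλ₂)) + φλ₁λ₂/√((1+φλ₁)(1+φλ₂)λ₁λ₂)`,
where `corr(U,V) = cov(U,V)/√(var(U) var(V))` and `cov(U,V) = E(UV) - E(U)E(V)`. -/
theorem stmt_7 {Ω : Type*} [MeasurableSpace Ω] (μ : Measure Ω) [IsProbabilityMeasure μ]
    (φ lam₁ lam₂ : ℝ) (hφ : φ ∈ Set.Ioo (0 : ℝ) 1) (hlam₁ : 0 < lam₁) (hlam₂ : 0 < lam₂)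
    (W T₁ T₂ : Ω → ℕ) (hWm : Measurable W) (hT₁m : Measurable T₁) (hT₂m : Measurable T₂)
    (hW01 : ∀ ω, W ω = 0 ∨ W ω = 1)
    (hW1 : μ {ω | W ω = 1} = ENNReal.ofReal (1 - φ))
    (hT₁ : ∀ k : ℕ,
      μ {ω | T₁ ω = k} = ENNReal.ofReal (Real.exp (-lam₁) * lam₁ ^ k / Nat.factorial k))
    (hT₂ : ∀ k : ℕ,
      μ {ω | T₂ ω = k} = ENNReal.ofReal (Real.exp (-lam₂) * lam₂ ^ k / Nat.factorial k))
    (hind : IndepFun W (fun ω => (T₁ ω, T₂ ω)) μ) :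
    ((∫ ω, ((W ω * T₁ ω : ℕ) : ℝ) * ((W ω * T₂ ω : ℕ) : ℝ) ∂μ)
        - (∫ ω, ((W ω * T₁ ω : ℕ) : ℝ) ∂μ) * (∫ ω, ((W ω * T₂ ω : ℕ) : ℝ) ∂μ))
      / Real.sqrt (variance (fun ω => ((W ω * T₁ ω : ℕ) : ℝ)) μ
          * variance (fun ω => ((W ω * T₂ ω : ℕ) : ℝ)) μ)
    = ((∫ ω, (T₁ ω : ℝ) * (T₂ ω : ℝ) ∂μ)
          - (∫ ω, (T₁ ω : ℝ) ∂μ) * (∫ ω, (T₂ ω : ℝ) ∂μ))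
        / Real.sqrt (variance (fun ω => (T₁ ω : ℝ)) μ * variance (fun ω => (T₂ ω : ℝ)) μ)
        / Real.sqrt ((1 + φ * lam₁) * (1 + φ * lam₂))
      + φ * lam₁ * lam₂ / Real.sqrt ((1 + φ * lam₁) * (1 + φ * lam₂) * lam₁ * lam₂) := by
  obtain ⟨hφ₀, hφ₁⟩ := hφ
  have hlaw₁ := hasLaw_poissonMeasure_of_measure_eq (r := ⟨lam₁, hlam₁.le⟩) hT₁m hT₁
  have hlaw₂ := hasLaw_poissonMeasure_of_measure_eq (r := ⟨lam₂, hlam₂.le⟩) hT₂m hT₂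
  have hW : ∀ ω, (W ω : ℝ) = 0 ∨ (W ω : ℝ) = 1 := fun ω ↦ by
    rcases hW01 ω with h | h <;> simp [h]
  have hEW : ∫ ω, (W ω : ℝ) ∂μ = 1 - φ := by
    rw [integral_natCast_eq_measureReal_of_zero_or_one hWm hW01, measureReal_def, hW1,
      ENNReal.toReal_ofReal (by linarith)]
  have hindℝ : IndepFun (fun ω ↦ (W ω : ℝ)) (fun ω ↦ ((T₁ ω : ℝ), (T₂ ω : ℝ))) μ :=
    hind.comp measurable_from_nat
      (measurable_of_countable fun n : ℕ × ℕ ↦ ((n.1 : ℝ), (n.2 : ℝ)))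
  have hWℝ : AEStronglyMeasurable (fun ω ↦ (W ω : ℝ)) μ :=
    (measurable_from_nat.comp hWm).aestronglyMeasurable
  have hL₁ := hlaw₁.memLp_natCast_of_poissonMeasure
  have hL₂ := hlaw₂.memLp_natCast_of_poissonMeasure
  simp only [Nat.cast_mul]
  rw [integral_mul_mul_sub_of_indepFun_of_zero_or_one hW hWℝ hL₁.1 hL₂.1 hindℝ,
    variance_mul_of_indepFun_of_zero_or_one hW hWℝ hL₁ (hindℝ.comp measurable_id measurable_fst),
    variance_mul_of_indepFun_of_zero_or_one hW hWℝ hL₂ (hindℝ.comp measurable_id measurable_snd),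
    hlaw₁.variance_natCast_of_poissonMeasure, hlaw₂.variance_natCast_of_poissonMeasure,
    hlaw₁.integral_natCast_of_poissonMeasure, hlaw₂.integral_natCast_of_poissonMeasure, hEW,
    sub_sub_cancel]
  exact corr_zeroInflated_eq _ hφ₀.le hφ₁ hlam₁ hlam₂
end

section
/- Fix λ₁, λ₂ > 0 and φ ∈ (0,1). For θ ∈ (0,1), let H⁺_θ denote the joint distribution function of the pair (X₁, X₂) = (W·T₁, W·T₂), where W ~ Bernoulli(1 − φ) is independent of (T₁, T₂) = (Y₁ + G_{θλ₁}^{−1}(U), Y₂ + G_{θλ₂}^{−1}(U)), with Y₁ ~ Poisson((1 − θ)λ₁), Y₂ ~ Poisson((1 − θ)λ₂), U ~ Uniform(0,1), and Y₁, Y₂, U mutually independent of each other and of W. If θ < θ′ then for all x₁, x₂ ∈ ℕ, H⁺_θ(x₁, x₂) ≤ H⁺_{θ′}(x₁, x₂); i.e., the model with parameter θ is smaller in the positive quadrant dependence ordering than the model with parameter θ′. -/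
open MeasureTheory ProbabilityTheory

/-- The Poisson(m) cumulative distribution function, with `poissonCDF m k = 0` for `k < 0`. -/
noncomputable def poissonCDF (m : ℝ) (k : ℤ) : ℝ :=
  if k < 0 then 0
  else ∑ i ∈ Finset.range (k.toNat + 1), Real.exp (-m) * m ^ i / Nat.factorial i

/-- The Poisson(m) quantile function: `min {k ∈ ℕ : G_m(k) ≥ u}`. -/
noncomputable def poissonQuantile (m : ℝ) (u : ℝ) : ℕ :=
  sInf {k : ℕ | u ≤ poissonCDF m k}

/-!
Conditionally on `W = 1`, the pair `(G⁻¹_{θλ₁}(U), G⁻¹_{θλ₂}(U))` is comonotone, so its joint CDF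
is the minimum of the marginal CDFs and the joint CDF of `(T₁, T₂)` is
`E[min (G_{θλ₁}(x₁ - Y₁), G_{θλ₂}(x₂ - Y₂))]`. Passing from `θ` to `θ' > θ` amounts to writing
`Yᵢ = Yᵢ' + Zᵢ` with `Zᵢ ~ Poisson((θ' - θ)λᵢ)` independent and moving `Zᵢ` into the comonotone
part, where `G_{θ'λᵢ}` is the convolution of the law of `Zᵢ` with `G_{θλᵢ}`. The inequality is then
`E[min (f(Z₁), g(Z₂))] ≤ min (E f(Z₁), E g(Z₂))`, applied conditionally on `(Y₁', Y₂')`.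
-/

open scoped ENNReal NNReal

lemma measurable_sInf_setOf_nat {α : Type*} [MeasurableSpace α] {p : ℕ → α → Prop}
    (hp : ∀ k, MeasurableSet {x | p k x}) : Measurable fun x => sInf {k | p k x} := by
  refine measurable_of_Iic fun n => ?_
  have : (fun x => sInf {k | p k x}) ⁻¹' Set.Iic n
      = (⋃ k ≤ n, {x | p k x}) ∪ ⋂ k, {x | p k x}ᶜ := by
    ext x
    simp only [Set.mem_preimage, Set.mem_Iic, Set.mem_union, Set.mem_iUnion, Set.mem_iInter,
      Set.mem_ofPred_eq, Set.mem_compl_iff, exists_prop]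
    by_cases hx : ∃ k, p k x
    · refine ⟨fun h => .inl ⟨_, h, Nat.sInf_mem hx⟩, ?_⟩
      rintro (⟨k, hkn, hk⟩ | h)
      exacts [(Nat.sInf_le hk).trans hkn, absurd hx (by simpa using h)]
    · push Not at hx
      simp [hx]
  rw [this]
  exact (MeasurableSet.biUnion (Set.to_countable _) fun k _ => hp k).union
    (MeasurableSet.iInter fun k => (hp k).compl)

lemma measurable_poissonQuantile (m : ℝ) : Measurable (poissonQuantile m) :=
  measurable_sInf_setOf_nat fun _ => measurableSet_Iic

lemma poissonCDF_eq_measureReal {m : ℝ} (hm : 0 ≤ m) (n : ℤ) :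
    poissonCDF m n = Po(ℤ, m.toNNReal).real (Set.Iic n) := by
  rw [map_measureReal_apply (by fun_prop) measurableSet_Iic, poissonCDF]
  split_ifs with hn
  · have : (Nat.cast ⁻¹' Set.Iic n : Set ℕ) = ∅ := by
      ext k
      simp only [Set.mem_preimage, Set.mem_Iic, Set.mem_empty_iff_false, iff_false, not_le]
      omega
    simp only [this, measureReal_empty]
  · have : (Nat.cast ⁻¹' Set.Iic n : Set ℕ) = ↑(Finset.range (n.toNat + 1)) := by
      ext k
      simp only [Set.mem_preimage, Set.mem_Iic, Finset.coe_range, Set.mem_Iio,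
        Order.lt_add_one_iff]
      omega
    rw [this, ← sum_measureReal_singleton]
    simp only [poissonMeasure_real_singleton, Real.coe_toNNReal m hm]

lemma ofReal_poissonCDF {m : ℝ} (hm : 0 ≤ m) (n : ℤ) :
    ENNReal.ofReal (poissonCDF m n) = Po(ℤ, m.toNNReal) (Set.Iic n) := by
  rw [poissonCDF_eq_measureReal hm, ofReal_measureReal]

lemma poissonCDF_le_one {m : ℝ} (hm : 0 ≤ m) (n : ℤ) : poissonCDF m n ≤ 1 := by
  rw [poissonCDF_eq_measureReal hm]
  exact measureReal_le_one

lemma monotone_poissonCDF {m : ℝ} (hm : 0 ≤ m) : Monotone (poissonCDF m) := by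
  intro n n' h
  simp only [poissonCDF_eq_measureReal hm]
  exact measureReal_mono (Set.Iic_subset_Iic.mpr h)

lemma exists_le_poissonCDF {m : ℝ} (hm : 0 ≤ m) {u : ℝ} (hu : u < 1) :
    ∃ k : ℕ, u ≤ poissonCDF m k := by
  have hlim := tendsto_measure_Iic_atTop Po(ℤ, m.toNNReal)
  rw [measure_univ] at hlim
  obtain ⟨n, hn⟩ := (hlim.eventually_const_lt (ENNReal.ofReal_lt_one.mpr hu)).exists
  rw [← ofReal_poissonCDF hm, ENNReal.ofReal_lt_ofReal_iff'] at hn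
  exact ⟨n.toNat, hn.1.le.trans (monotone_poissonCDF hm (Int.self_le_toNat n))⟩

lemma poissonQuantile_le_iff {m : ℝ} (hm : 0 ≤ m) {u : ℝ} (hu : u < 1) (n : ℕ) :
    poissonQuantile m u ≤ n ↔ u ≤ poissonCDF m n := by
  refine ⟨fun h => ?_, fun h => Nat.sInf_le h⟩
  have hmem : u ≤ poissonCDF m (poissonQuantile m u) := Nat.sInf_mem (exists_le_poissonCDF hm hu)
  exact hmem.trans (monotone_poissonCDF hm (by exact_mod_cast h))

lemma add_poissonQuantile_le_iff {m : ℝ} (hm : 0 ≤ m) {u : ℝ} (hu : u ∈ Set.Ioo 0 1)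
    (k x : ℕ) : k + poissonQuantile m u ≤ x ↔ u ≤ poissonCDF m (x - k) := by
  rcases le_or_gt k x with hkx | hxk
  · rw [← Nat.le_sub_iff_add_le' hkx, poissonQuantile_le_iff hm hu.2, Nat.cast_sub hkx]
  · have : poissonCDF m (x - k) = 0 := if_pos (by omega)
    rw [this]
    exact iff_of_false (by omega) hu.1.not_ge

lemma volume_restrict_Ioo_Iic {c : ℝ} (hc : c ≤ 1) :
    volume.restrict (Set.Ioo 0 1) (Set.Iic c) = ENNReal.ofReal c := by
  rw [Measure.restrict_apply measurableSet_Iic]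
  apply le_antisymm
  · calc volume (Set.Iic c ∩ Set.Ioo 0 1) ≤ volume (Set.Ioc 0 c) :=
          measure_mono fun u hu => ⟨hu.2.1, hu.1⟩
      _ = ENNReal.ofReal c := by simp
  · calc ENNReal.ofReal c = volume (Set.Ioo 0 c) := by simp
      _ ≤ volume (Set.Iic c ∩ Set.Ioo 0 1) :=
          measure_mono fun u hu => ⟨hu.2.le, hu.1, hu.2.trans_le hc⟩

lemma lintegral_lintegral_min_le {α β : Type*} [MeasurableSpace α] [MeasurableSpace β]
    {ν₁ : Measure α} {ν₂ : Measure β} [IsProbabilityMeasure ν₁] [IsProbabilityMeasure ν₂]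
    (f : α → ℝ≥0∞) (g : β → ℝ≥0∞) :
    ∫⁻ y₁, ∫⁻ y₂, min (f y₁) (g y₂) ∂ν₂ ∂ν₁ ≤ min (∫⁻ y₁, f y₁ ∂ν₁) (∫⁻ y₂, g y₂ ∂ν₂) := by
  refine le_min ?_ ?_
  · calc ∫⁻ y₁, ∫⁻ y₂, min (f y₁) (g y₂) ∂ν₂ ∂ν₁ ≤ ∫⁻ y₁, ∫⁻ _, f y₁ ∂ν₂ ∂ν₁ := by
          gcongr with y₁ y₂; exact min_le_left _ _
      _ = ∫⁻ y₁, f y₁ ∂ν₁ := by simp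
  · calc ∫⁻ y₁, ∫⁻ y₂, min (f y₁) (g y₂) ∂ν₂ ∂ν₁ ≤ ∫⁻ _, ∫⁻ y₂, g y₂ ∂ν₂ ∂ν₁ := by
          gcongr with y₁ y₂; exact min_le_right _ _
      _ = ∫⁻ y₂, g y₂ ∂ν₂ := by simp

lemma conv_apply_Iic (γ β : Measure ℤ) (n : ℤ) :
    (γ ∗ β) (Set.Iic n) = ∫⁻ j, β (Set.Iic (n - j)) ∂γ := by
  rw [← lintegral_indicator_one measurableSet_Iic, Measure.lintegral_conv (by fun_prop)]
  congr! 2 with j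
  rw [← lintegral_indicator_one measurableSet_Iic]
  congr! 2 with i
  simp [Set.indicator, le_sub_iff_add_le']

/-- The joint CDF at `(x₁, x₂)` of `(A₁ + B₁, A₂ + B₂)`, where `A₁ ~ α₁` and `A₂ ~ α₂` are
independent of each other and of a comonotone pair `(B₁, B₂)` with marginals `β₁`, `β₂` (whose
joint CDF is the minimum of the marginal CDFs). -/
noncomputable def comonotoneShockCDF (α₁ α₂ β₁ β₂ : Measure ℤ) (x₁ x₂ : ℤ) : ℝ≥0∞ :=
  ∫⁻ k₁, ∫⁻ k₂, min (β₁ (Set.Iic (x₁ - k₁))) (β₂ (Set.Iic (x₂ - k₂))) ∂α₂ ∂α₁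

theorem comonotoneShockCDF_conv_le (α₁ α₂ γ₁ γ₂ β₁ β₂ : Measure ℤ)
    [IsProbabilityMeasure γ₁] [IsProbabilityMeasure γ₂] (x₁ x₂ : ℤ) :
    comonotoneShockCDF (α₁ ∗ γ₁) (α₂ ∗ γ₂) β₁ β₂ x₁ x₂
      ≤ comonotoneShockCDF α₁ α₂ (γ₁ ∗ β₁) (γ₂ ∗ β₂) x₁ x₂ := by
  set F : ℤ → ℤ → ℝ≥0∞ := fun k₁ k₂ => min (β₁ (Set.Iic (x₁ - k₁))) (β₂ (Set.Iic (x₂ - k₂)))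
  calc comonotoneShockCDF (α₁ ∗ γ₁) (α₂ ∗ γ₂) β₁ β₂ x₁ x₂
      = ∫⁻ m₁, ∫⁻ j₁, ∫⁻ m₂, ∫⁻ j₂, F (m₁ + j₁) (m₂ + j₂) ∂γ₂ ∂α₂ ∂γ₁ ∂α₁ := by
        simp only [comonotoneShockCDF, Measure.lintegral_conv Measurable.of_discrete, F]
    _ = ∫⁻ m₁, ∫⁻ m₂, ∫⁻ j₁, ∫⁻ j₂, F (m₁ + j₁) (m₂ + j₂) ∂γ₂ ∂γ₁ ∂α₂ ∂α₁ := by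
        refine lintegral_congr fun m₁ => ?_
        exact lintegral_lintegral_swap (Measurable.of_discrete).aemeasurable
    _ ≤ comonotoneShockCDF α₁ α₂ (γ₁ ∗ β₁) (γ₂ ∗ β₂) x₁ x₂ := by
        simp only [comonotoneShockCDF, conv_apply_Iic]
        gcongr with m₁ m₂
        convert lintegral_lintegral_min_le (ν₁ := γ₁) (ν₂ := γ₂) _ _ using 4 <;> simp only [sub_sub]

lemma map_eq_poissonMeasure {Ω : Type*} [MeasurableSpace Ω] {μ : Measure Ω} {Y : Ω → ℕ}
    (hYm : Measurable Y) {m : ℝ} (hm : 0 ≤ m)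
    (hY : ∀ k : ℕ, μ {ω | Y ω = k} = ENNReal.ofReal (Real.exp (-m) * m ^ k / Nat.factorial k)) :
    μ.map Y = Po(m.toNNReal) := by
  refine Measure.ext_of_singleton fun k => ?_
  rw [Measure.map_apply hYm (measurableSet_singleton k), poissonMeasure_singleton,
    Real.coe_toNNReal m hm]
  exact hY k

lemma measure_add_poissonQuantile_le_eq_comonotoneShockCDF {Ω : Type*} [MeasurableSpace Ω] {μ : Measure Ω}
    [IsProbabilityMeasure μ] {Y₁ Y₂ : Ω → ℕ} {U : Ω → ℝ} (hY₁m : Measurable Y₁)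
    (hY₂m : Measurable Y₂) (hUm : Measurable U) {a₁ a₂ : ℝ≥0} {b₁ b₂ : ℝ} (hb₁ : 0 ≤ b₁)
    (hb₂ : 0 ≤ b₂) (hY₁ : μ.map Y₁ = Po(a₁)) (hY₂ : μ.map Y₂ = Po(a₂))
    (hU : μ.map U = volume.restrict (Set.Ioo (0 : ℝ) 1))
    (hind₂ : IndepFun Y₁ (fun ω => (Y₂ ω, U ω)) μ) (hind₃ : IndepFun Y₂ U μ) (x₁ x₂ : ℕ) :
    μ {ω | Y₁ ω + poissonQuantile b₁ (U ω) ≤ x₁ ∧ Y₂ ω + poissonQuantile b₂ (U ω) ≤ x₂}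
      = comonotoneShockCDF Po(ℤ, a₁) Po(ℤ, a₂) Po(ℤ, b₁.toNNReal) Po(ℤ, b₂.toNNReal) x₁ x₂ := by
  have hQ₁ := measurable_poissonQuantile b₁
  have hQ₂ := measurable_poissonQuantile b₂
  have hlaw : μ.map (fun ω => (Y₁ ω, Y₂ ω, U ω))
      = Po(a₁).prod (Po(a₂).prod (volume.restrict (Set.Ioo (0 : ℝ) 1))) := by
    rw [(indepFun_iff_map_prod_eq_prod_map_map hY₁m.aemeasurable (by fun_prop)).1 hind₂,
      (indepFun_iff_map_prod_eq_prod_map_map hY₂m.aemeasurable hUm.aemeasurable).1 hind₃,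
      hY₁, hY₂, hU]
  set S : Set (ℕ × ℕ × ℝ) :=
    {p | p.1 + poissonQuantile b₁ p.2.2 ≤ x₁ ∧ p.2.1 + poissonQuantile b₂ p.2.2 ≤ x₂}
  have hS : MeasurableSet S := by
    refine Measurable.setOf (Measurable.and ?_ ?_) <;>
      exact measurableSet_setOfPred.1 (measurableSet_le (by fun_prop) measurable_const)
  have hslice (k₁ k₂ : ℕ) : Set.Ioo 0 1 ∩ {u | (k₁, k₂, u) ∈ S} = Set.Ioo 0 1 ∩ Set.Iic
      (min (poissonCDF b₁ (x₁ - k₁)) (poissonCDF b₂ (x₂ - k₂))) := by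
    ext u
    simp only [Set.mem_inter_iff, Set.mem_ofPred_eq, Set.mem_Iic, le_min_iff, S]
    exact and_congr_right fun hu =>
      and_congr (add_poissonQuantile_le_iff hb₁ hu _ _) (add_poissonQuantile_le_iff hb₂ hu _ _)
  calc μ {ω | Y₁ ω + poissonQuantile b₁ (U ω) ≤ x₁ ∧ Y₂ ω + poissonQuantile b₂ (U ω) ≤ x₂}
      = μ.map (fun ω => (Y₁ ω, Y₂ ω, U ω)) S :=
        (Measure.map_apply (hY₁m.prodMk (hY₂m.prodMk hUm)) hS).symm
    _ = ∫⁻ k₁, ∫⁻ k₂, volume.restrict (Set.Ioo 0 1) {u | (k₁, k₂, u) ∈ S} ∂Po(a₂) ∂Po(a₁) := by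
        rw [hlaw, Measure.prod_apply hS]
        refine lintegral_congr fun k₁ => ?_
        exact Measure.prod_apply (measurable_prodMk_left hS)
    _ = comonotoneShockCDF Po(ℤ, a₁) Po(ℤ, a₂) Po(ℤ, b₁.toNNReal) Po(ℤ, b₂.toNNReal) x₁ x₂ := by
        simp only [comonotoneShockCDF, lintegral_map Measurable.of_discrete Measurable.of_discrete]
        refine lintegral_congr fun k₁ => lintegral_congr fun k₂ => ?_
        rw [Measure.restrict_apply' measurableSet_Ioo, Set.inter_comm, hslice, Set.inter_comm,
          ← Measure.restrict_apply' measurableSet_Ioo,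
          volume_restrict_Ioo_Iic (min_le_of_left_le (poissonCDF_le_one hb₁ _)),
          ENNReal.ofReal_min, ofReal_poissonCDF hb₁, ofReal_poissonCDF hb₂]

lemma measure_mul_le_and_mul_le {Ω : Type*} [MeasurableSpace Ω] {μ : Measure Ω}
    [IsProbabilityMeasure μ] {W T₁ T₂ : Ω → ℕ} (hWm : Measurable W)
    (hW01 : ∀ ω, W ω = 0 ∨ W ω = 1) (hind : IndepFun W (fun ω => (T₁ ω, T₂ ω)) μ) (x₁ x₂ : ℕ) :
    μ {ω | W ω * T₁ ω ≤ x₁ ∧ W ω * T₂ ω ≤ x₂}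
      = (1 - μ {ω | W ω = 1}) + μ {ω | W ω = 1} * μ {ω | T₁ ω ≤ x₁ ∧ T₂ ω ≤ x₂} := by
  have hW1 : MeasurableSet {ω | W ω = 1} := hWm (measurableSet_singleton 1)
  have hsplit : {ω | W ω * T₁ ω ≤ x₁ ∧ W ω * T₂ ω ≤ x₂}
      = {ω | W ω = 1}ᶜ ∪ ({ω | W ω = 1} ∩ {ω | T₁ ω ≤ x₁ ∧ T₂ ω ≤ x₂}) := by
    ext ω
    rcases hW01 ω with h | h <;> simp [h]
  rw [hsplit, measure_union' (disjoint_compl_left.mono_right Set.inter_subset_left) hW1.compl,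
    prob_compl_eq_one_sub hW1]
  congr 1
  exact hind.measure_inter_preimage_eq_mul {1} {p | p.1 ≤ x₁ ∧ p.2 ≤ x₂}
    (measurableSet_singleton 1) .of_discrete

theorem measure_mul_add_poissonQuantile_le_eq {Ω : Type*} [MeasurableSpace Ω]
    {μ : Measure Ω} [IsProbabilityMeasure μ] {a₁ a₂ b₁ b₂ : ℝ} (ha₁ : 0 ≤ a₁) (ha₂ : 0 ≤ a₂)
    (hb₁ : 0 ≤ b₁) (hb₂ : 0 ≤ b₂) {W Y₁ Y₂ : Ω → ℕ} {U : Ω → ℝ} (hWm : Measurable W)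
    (hY₁m : Measurable Y₁) (hY₂m : Measurable Y₂) (hUm : Measurable U)
    (hW01 : ∀ ω, W ω = 0 ∨ W ω = 1)
    (hY₁ : ∀ k : ℕ, μ {ω | Y₁ ω = k}
      = ENNReal.ofReal (Real.exp (-a₁) * a₁ ^ k / Nat.factorial k))
    (hY₂ : ∀ k : ℕ, μ {ω | Y₂ ω = k}
      = ENNReal.ofReal (Real.exp (-a₂) * a₂ ^ k / Nat.factorial k))
    (hU : μ.map U = volume.restrict (Set.Ioo (0 : ℝ) 1))
    (hind₁ : IndepFun W (fun ω => (Y₁ ω, Y₂ ω, U ω)) μ)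
    (hind₂ : IndepFun Y₁ (fun ω => (Y₂ ω, U ω)) μ) (hind₃ : IndepFun Y₂ U μ) (x₁ x₂ : ℕ) :
    μ {ω | W ω * (Y₁ ω + poissonQuantile b₁ (U ω)) ≤ x₁ ∧
        W ω * (Y₂ ω + poissonQuantile b₂ (U ω)) ≤ x₂}
      = (1 - μ {ω | W ω = 1}) + μ {ω | W ω = 1} * comonotoneShockCDF Po(ℤ, a₁.toNNReal)
          Po(ℤ, a₂.toNNReal) Po(ℤ, b₁.toNNReal) Po(ℤ, b₂.toNNReal) x₁ x₂ := by
  have hQ₁ := measurable_poissonQuantile b₁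
  have hQ₂ := measurable_poissonQuantile b₂
  have hindT : IndepFun W (fun ω => (Y₁ ω + poissonQuantile b₁ (U ω),
      Y₂ ω + poissonQuantile b₂ (U ω))) μ :=
    hind₁.comp measurable_id (show Measurable fun p : ℕ × ℕ × ℝ =>
      (p.1 + poissonQuantile b₁ p.2.2, p.2.1 + poissonQuantile b₂ p.2.2) by fun_prop)
  rw [measure_mul_le_and_mul_le hWm hW01 hindT, measure_add_poissonQuantile_le_eq_comonotoneShockCDF hY₁m hY₂m hUm
    hb₁ hb₂ (map_eq_poissonMeasure hY₁m ha₁ hY₁) (map_eq_poissonMeasure hY₂m ha₂ hY₂) hU hind₂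
    hind₃]

theorem stmt_15_general {Ω Ω' : Type*} [MeasurableSpace Ω] [MeasurableSpace Ω']
    (μ : Measure Ω) (μ' : Measure Ω') [IsProbabilityMeasure μ] [IsProbabilityMeasure μ']
    (lam₁ lam₂ φ θ θ' : ℝ) (hlam₁ : 0 < lam₁) (hlam₂ : 0 < lam₂)
    (hθ : θ ∈ Set.Ioo (0 : ℝ) 1) (hθ' : θ' ∈ Set.Ioo (0 : ℝ) 1)
    (hlt : θ < θ')
    (W : Ω → ℕ) (Y₁ Y₂ : Ω → ℕ) (U : Ω → ℝ)
    (hWm : Measurable W) (hY₁m : Measurable Y₁) (hY₂m : Measurable Y₂) (hUm : Measurable U)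
    (hW01 : ∀ ω, W ω = 0 ∨ W ω = 1)
    (hW1 : μ {ω | W ω = 1} = ENNReal.ofReal (1 - φ))
    (hY₁ : ∀ k : ℕ, μ {ω | Y₁ ω = k}
      = ENNReal.ofReal (Real.exp (-((1 - θ) * lam₁)) * ((1 - θ) * lam₁) ^ k / Nat.factorial k))
    (hY₂ : ∀ k : ℕ, μ {ω | Y₂ ω = k}
      = ENNReal.ofReal (Real.exp (-((1 - θ) * lam₂)) * ((1 - θ) * lam₂) ^ k / Nat.factorial k))
    (hU : Measure.map U μ = volume.restrict (Set.Ioo (0 : ℝ) 1))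
    (hind₁ : IndepFun W (fun ω => (Y₁ ω, Y₂ ω, U ω)) μ)
    (hind₂ : IndepFun Y₁ (fun ω => (Y₂ ω, U ω)) μ)
    (hind₃ : IndepFun Y₂ U μ)
    (W' : Ω' → ℕ) (Y₁' Y₂' : Ω' → ℕ) (U' : Ω' → ℝ)
    (hWm' : Measurable W') (hY₁m' : Measurable Y₁') (hY₂m' : Measurable Y₂')
    (hUm' : Measurable U')
    (hW01' : ∀ ω, W' ω = 0 ∨ W' ω = 1)
    (hW1' : μ' {ω | W' ω = 1} = ENNReal.ofReal (1 - φ))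
    (hY₁' : ∀ k : ℕ, μ' {ω | Y₁' ω = k}
      = ENNReal.ofReal (Real.exp (-((1 - θ') * lam₁)) * ((1 - θ') * lam₁) ^ k / Nat.factorial k))
    (hY₂' : ∀ k : ℕ, μ' {ω | Y₂' ω = k}
      = ENNReal.ofReal (Real.exp (-((1 - θ') * lam₂)) * ((1 - θ') * lam₂) ^ k / Nat.factorial k))
    (hU' : Measure.map U' μ' = volume.restrict (Set.Ioo (0 : ℝ) 1))
    (hind₁' : IndepFun W' (fun ω => (Y₁' ω, Y₂' ω, U' ω)) μ')
    (hind₂' : IndepFun Y₁' (fun ω => (Y₂' ω, U' ω)) μ')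
    (hind₃' : IndepFun Y₂' U' μ') :
    ∀ x₁ x₂ : ℕ,
      μ {ω | W ω * (Y₁ ω + poissonQuantile (θ * lam₁) (U ω)) ≤ x₁ ∧
             W ω * (Y₂ ω + poissonQuantile (θ * lam₂) (U ω)) ≤ x₂}
      ≤ μ' {ω | W' ω * (Y₁' ω + poissonQuantile (θ' * lam₁) (U' ω)) ≤ x₁ ∧
                W' ω * (Y₂' ω + poissonQuantile (θ' * lam₂) (U' ω)) ≤ x₂} := by
  intro x₁ x₂
  obtain ⟨hθ0, -⟩ := hθ
  have hθ'1 : θ' < 1 := hθ'.2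
  have hsplit (lam : ℝ) (hlam : 0 < lam) :
      ((1 - θ) * lam).toNNReal = ((1 - θ') * lam).toNNReal + ((θ' - θ) * lam).toNNReal ∧
        (θ' * lam).toNNReal = ((θ' - θ) * lam).toNNReal + (θ * lam).toNNReal := by
    constructor <;> rw [← Real.toNNReal_add (by nlinarith) (by nlinarith)] <;> ring_nf
  rw [measure_mul_add_poissonQuantile_le_eq (by nlinarith) (by nlinarith) (by nlinarith)
      (by nlinarith) hWm hY₁m hY₂m hUm hW01 hY₁ hY₂ hU hind₁ hind₂ hind₃,
    measure_mul_add_poissonQuantile_le_eq (by nlinarith) (by nlinarith) (by nlinarith)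
      (by nlinarith) hWm' hY₁m' hY₂m' hUm' hW01' hY₁' hY₂' hU' hind₁' hind₂' hind₃', hW1, hW1',
    (hsplit lam₁ hlam₁).1, (hsplit lam₂ hlam₂).1, (hsplit lam₁ hlam₁).2, (hsplit lam₂ hlam₂).2]
  simp only [← map_cast_poissonMeasure_conv]
  gcongr
  exact comonotoneShockCDF_conv_le ..

/-- PQD ordering in `θ` for the comonotonic-shock bivariate zero-inflated Poisson model
`BZIP⁺(λ₁, λ₂, θ, φ)`: if `θ < θ'` then the joint CDF at parameter `θ` is pointwise at most
the joint CDF at parameter `θ'`. Each model is `(X₁, X₂) = (W T₁, W T₂)` with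
`(T₁, T₂) = (Y₁ + G_{θλ₁}⁻¹(U), Y₂ + G_{θλ₂}⁻¹(U))`, where `W ~ Bernoulli(1-φ)`,
`Y₁ ~ Poisson((1-θ)λ₁)`, `Y₂ ~ Poisson((1-θ)λ₂)`, `U ~ Uniform(0,1)`, all mutually
independent (expressed by the equivalent sequential conditions `W ⟂ (Y₁, Y₂, U)`,
`Y₁ ⟂ (Y₂, U)`, `Y₂ ⟂ U`). -/
theorem stmt_15 {Ω Ω' : Type*} [MeasurableSpace Ω] [MeasurableSpace Ω']
    (μ : Measure Ω) (μ' : Measure Ω') [IsProbabilityMeasure μ] [IsProbabilityMeasure μ']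
    (lam₁ lam₂ φ θ θ' : ℝ) (hlam₁ : 0 < lam₁) (hlam₂ : 0 < lam₂)
    (hφ : φ ∈ Set.Ioo (0 : ℝ) 1) (hθ : θ ∈ Set.Ioo (0 : ℝ) 1) (hθ' : θ' ∈ Set.Ioo (0 : ℝ) 1)
    (hlt : θ < θ')
    (W : Ω → ℕ) (Y₁ Y₂ : Ω → ℕ) (U : Ω → ℝ)
    (hWm : Measurable W) (hY₁m : Measurable Y₁) (hY₂m : Measurable Y₂) (hUm : Measurable U)
    (hW01 : ∀ ω, W ω = 0 ∨ W ω = 1)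
    (hW1 : μ {ω | W ω = 1} = ENNReal.ofReal (1 - φ))
    (hY₁ : ∀ k : ℕ, μ {ω | Y₁ ω = k}
      = ENNReal.ofReal (Real.exp (-((1 - θ) * lam₁)) * ((1 - θ) * lam₁) ^ k / Nat.factorial k))
    (hY₂ : ∀ k : ℕ, μ {ω | Y₂ ω = k}
      = ENNReal.ofReal (Real.exp (-((1 - θ) * lam₂)) * ((1 - θ) * lam₂) ^ k / Nat.factorial k))
    (hU : Measure.map U μ = volume.restrict (Set.Ioo (0 : ℝ) 1))
    (hind₁ : IndepFun W (fun ω => (Y₁ ω, Y₂ ω, U ω)) μ)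
    (hind₂ : IndepFun Y₁ (fun ω => (Y₂ ω, U ω)) μ)
    (hind₃ : IndepFun Y₂ U μ)
    (W' : Ω' → ℕ) (Y₁' Y₂' : Ω' → ℕ) (U' : Ω' → ℝ)
    (hWm' : Measurable W') (hY₁m' : Measurable Y₁') (hY₂m' : Measurable Y₂')
    (hUm' : Measurable U')
    (hW01' : ∀ ω, W' ω = 0 ∨ W' ω = 1)
    (hW1' : μ' {ω | W' ω = 1} = ENNReal.ofReal (1 - φ))
    (hY₁' : ∀ k : ℕ, μ' {ω | Y₁' ω = k}
      = ENNReal.ofReal (Real.exp (-((1 - θ') * lam₁)) * ((1 - θ') * lam₁) ^ k / Nat.factorial k))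
    (hY₂' : ∀ k : ℕ, μ' {ω | Y₂' ω = k}
      = ENNReal.ofReal (Real.exp (-((1 - θ') * lam₂)) * ((1 - θ') * lam₂) ^ k / Nat.factorial k))
    (hU' : Measure.map U' μ' = volume.restrict (Set.Ioo (0 : ℝ) 1))
    (hind₁' : IndepFun W' (fun ω => (Y₁' ω, Y₂' ω, U' ω)) μ')
    (hind₂' : IndepFun Y₁' (fun ω => (Y₂' ω, U' ω)) μ')
    (hind₃' : IndepFun Y₂' U' μ') :
    ∀ x₁ x₂ : ℕ,
      μ {ω | W ω * (Y₁ ω + poissonQuantile (θ * lam₁) (U ω)) ≤ x₁ ∧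
             W ω * (Y₂ ω + poissonQuantile (θ * lam₂) (U ω)) ≤ x₂}
      ≤ μ' {ω | W' ω * (Y₁' ω + poissonQuantile (θ' * lam₁) (U' ω)) ≤ x₁ ∧
                W' ω * (Y₂' ω + poissonQuantile (θ' * lam₂) (U' ω)) ≤ x₂} :=
  stmt_15_general μ μ' lam₁ lam₂ φ θ θ' hlam₁ hlam₂ hθ hθ' hlt W Y₁ Y₂ U hWm hY₁m hY₂m hUm hW01 hW1
    hY₁ hY₂ hU hind₁ hind₂ hind₃ W' Y₁' Y₂' U' hWm' hY₁m' hY₂m' hUm' hW01' hW1' hY₁' hY₂' hU' hind₁'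
    hind₂' hind₃'
end
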